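/- arXiv:2307.14532 — 5 statements merged into one kernel-verified Lean document; each statement's English description precedes it below -/
import Mathlib

section
/- If A = A1 ∪ A2 is a disjoint partition of a set A of variable nodes such that every check node in the subgraph induced by A has even degree, and A1 is an (a1, b1)-absorbing set while A2 is an (a2, b2)-absorbing set, then b1 = b2. -/
/-- Degree of check node `c` in the subgraph induced by the variable-node set `S`. -/
def chkDeg {V W : Type*} [Fintype V] [DecidableEq V]
    (Adj : V → W → Prop) [∀ v w, Decidable (Adj v w)] (S : Finset V) (c : W) : ℕ :=
  (S.filter (fun v => Adj v c)).card

/-- The odd-degree check nodes of the subgraph induced by `S`. -/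
def oddChecks {V W : Type*} [Fintype V] [Fintype W] [DecidableEq V] [DecidableEq W]
    (Adj : V → W → Prop) [∀ v w, Decidable (Adj v w)] (S : Finset V) : Finset W :=
  Finset.univ.filter (fun c => Odd (chkDeg Adj S c))

/-- `S` is an `(a,b)`-absorbing set: `|S| = a`, the induced subgraph has exactly `b`
odd-degree check nodes, and every `v ∈ S` has strictly more even-degree than odd-degree
check-node neighbors in the induced subgraph. -/
def IsAbsorbing {V W : Type*} [Fintype V] [Fintype W] [DecidableEq V] [DecidableEq W]
    (Adj : V → W → Prop) [∀ v w, Decidable (Adj v w)] (S : Finset V) (a b : ℕ) : Prop :=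
  S.card = a ∧ (oddChecks Adj S).card = b ∧
  ∀ v ∈ S,
    (Finset.univ.filter (fun c : W => Adj v c ∧ Even (chkDeg Adj S c))).card >
    (Finset.univ.filter (fun c : W => Adj v c ∧ Odd (chkDeg Adj S c))).card

theorem chkDeg_union_of_disjoint {V W : Type*} [Fintype V] [DecidableEq V]
    (Adj : V → W → Prop) [∀ v w, Decidable (Adj v w)] {S T : Finset V}
    (h : Disjoint S T) (c : W) :
    chkDeg Adj (S ∪ T) c = chkDeg Adj S c + chkDeg Adj T c := by
  rw [chkDeg, Finset.filter_union, Finset.card_union_of_disjoint (Finset.disjoint_filter_filter h)]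
  rfl

section Parity

variable {V W : Type*} [Fintype V] [Fintype W] [DecidableEq V] [DecidableEq W]
  (Adj : V → W → Prop) [∀ v w, Decidable (Adj v w)]

theorem oddChecks_union_of_disjoint {S T : Finset V} (h : Disjoint S T) :
    oddChecks Adj (S ∪ T) = symmDiff (oddChecks Adj S) (oddChecks Adj T) := by
  ext c
  simp only [oddChecks, Finset.mem_symmDiff, Finset.mem_filter, Finset.mem_univ, true_and,
    chkDeg_union_of_disjoint Adj h, ← Nat.not_even_iff_odd, Nat.even_add]
  tauto

theorem oddChecks_eq_empty_iff {S : Finset V} :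
    oddChecks Adj S = ∅ ↔ ∀ c, Even (chkDeg Adj S c) := by
  simp [oddChecks, Finset.filter_eq_empty_iff]

theorem oddChecks_eq_of_even_chkDeg_union {S T : Finset V} (h : Disjoint S T)
    (heven : ∀ c, Even (chkDeg Adj (S ∪ T) c)) :
    oddChecks Adj S = oddChecks Adj T := by
  rw [← symmDiff_eq_bot, ← oddChecks_union_of_disjoint Adj h]
  exact (oddChecks_eq_empty_iff Adj).2 heven

end Parity

/-- If `A = A1 ∪ A2` is a disjoint partition with every check node of `G_A` of even degree,
`A1` an `(a1,b1)`-absorbing set and `A2` an `(a2,b2)`-absorbing set, then `b1 = b2`. -/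
theorem stmt_1 {V W : Type*} [Fintype V] [Fintype W] [DecidableEq V] [DecidableEq W]
    (Adj : V → W → Prop) [∀ v w, Decidable (Adj v w)]
    (A A1 A2 : Finset V) (a1 b1 a2 b2 : ℕ)
    (hunion : A = A1 ∪ A2) (hdisj : Disjoint A1 A2)
    (heven : ∀ c : W, Even (chkDeg Adj A c))
    (h1 : IsAbsorbing Adj A1 a1 b1) (h2 : IsAbsorbing Adj A2 a2 b2) :
    b1 = b2 := by
  subst hunion
  rw [← h1.2.1, ← h2.2.1, oddChecks_eq_of_even_chkDeg_union Adj hdisj heven]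
end

section
/- In the path Tanner graph v_1 c_1 v_2 c_2 ... c_{a−1} v_a under the syndrome-based Gallager-B decoder with the single variable node v_1 in error (input syndrome (1, 0, ..., 0)), the estimated syndrome at iteration ℓ ≥ 1 equals (0, 1, 1, ..., 1, 0, ..., 0) with exactly min(ℓ−1, a−2) ones starting in position 2; in particular the estimated syndrome never equals the input syndrome. -/
/-- Message state on the path Tanner graph `v_0 c_0 v_1 c_1 … c_{a-2} v_{a-1}`
(0-indexed; there are `a` variable nodes and `a - 1` check nodes).  For an index
`i < a - 1`, the first component is the message `v_i → c_i` and the second component is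
the message `v_{i+1} → c_i`; values at other indices are irrelevant (kept `0`). -/
abbrev PathState := (ℕ → ZMod 2) × (ℕ → ZMod 2)

/-- One Gallager-B iteration on the path with input syndrome `σ`: check `c_i` sends over
each edge `σ i` XOR the extrinsic incoming message; a degree-2 variable node forwards
each incoming message to its other neighbor; the degree-1 end nodes `v_0`, `v_{a-1}`
always send `0`. -/
def pathStep (a : ℕ) (σ : ℕ → ZMod 2) (s : PathState) : PathState :=
  (fun i => if i = 0 ∨ ¬ i < a - 1 then 0 else σ (i - 1) + s.1 (i - 1),
   fun i => if i + 1 < a - 1 then σ (i + 1) + s.2 (i + 1) else 0)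

/-- Estimated syndrome at check node `c_i`: XOR of its two incoming variable messages. -/
def pathEstSyn (s : PathState) (i : ℕ) : ZMod 2 := s.1 i + s.2 i

lemma pathKey (a : ℕ) (σ : ℕ → ZMod 2) (hσ : σ = fun i => if i = 0 then 1 else 0) (k : ℕ) :
    (pathStep a σ)^[k] (0, 0) =
      ((fun i => if 1 ≤ i ∧ i ≤ k ∧ i < a - 1 then 1 else 0), fun _ => 0) := by
  induction k with
  | zero =>
    refine Prod.ext ?_ ?_ <;> funext i
    · exact (if_neg (by omega)).symm
    · rfl
  | succ k ih =>
    rw [Function.iterate_succ_apply', ih, pathStep, hσ]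
    refine Prod.ext ?_ ?_
    · funext i
      simp only
      split_ifs <;> first | rfl | omega
    · funext i
      simp

/-- On the path Tanner graph with the single variable node `v_0` in error (input syndrome
`(1,0,…,0)`), the estimated syndrome at iteration `ℓ ≥ 1` equals `0` at check `c_0` and
`1` exactly at the checks `c_i` with `1 ≤ i ≤ min (ℓ-1) (a-2)`; in particular the
estimated syndrome never equals the input syndrome. -/
theorem stmt_14 (a : ℕ) (ha : 2 ≤ a) (σ : ℕ → ZMod 2)
    (hσ : σ = fun i => if i = 0 then 1 else 0) :
    (∀ ℓ : ℕ, 1 ≤ ℓ → ∀ i : ℕ, i < a - 1 →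
      pathEstSyn ((pathStep a σ)^[ℓ - 1] (0, 0)) i =
        if 1 ≤ i ∧ i ≤ min (ℓ - 1) (a - 2) then 1 else 0) ∧
    (∀ ℓ : ℕ, ¬ (∀ i : ℕ, i < a - 1 →
      pathEstSyn ((pathStep a σ)^[ℓ] (0, 0)) i = σ i)) := by
  constructor
  · intro ℓ hℓ i hi
    rw [pathKey a σ hσ, pathEstSyn]
    simp only [add_zero]
    split_ifs <;> first | rfl | omega
  · intro ℓ h
    have h0 := h 0 (by omega)
    rw [pathKey a σ hσ, pathEstSyn, hσ] at h0
    simp at h0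
end

section
/- If A1 and A2 are disjoint absorbing sets with b1, b2 ≥ 1 odd-degree check nodes respectively, their even-degree check nodes have all their graph neighbors inside the corresponding A_i, and their odd-degree check node sets have nonempty intersection D, then under the Gallager-B syndrome decoder with A1 in error, every variable node in A1 ∪ A2 sends 0 in every iteration; hence the estimated syndrome at each check node in D is 0 forever while the input syndrome there is 1. -/
open Finset

/-- Even-degree check nodes of the subgraph induced by `S` (among its check neighbors). -/
def evenChecks {V W : Type*} [Fintype V] [Fintype W] [DecidableEq V] [DecidableEq W]
    (Adj : V → W → Prop) [∀ v w, Decidable (Adj v w)] (S : Finset V) : Finset W :=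
  Finset.univ.filter (fun c => (∃ v ∈ S, Adj v c) ∧ Even (chkDeg Adj S c))

/-- Gallager-B check-to-variable message: `σ c` XOR the extrinsic incoming variable
messages. -/
def ctov {V W : Type*} [Fintype V] [DecidableEq V]
    (Adj : V → W → Prop) [∀ v w, Decidable (Adj v w)]
    (σ : W → ZMod 2) (m : V → W → ZMod 2) (c : W) (v : V) : ZMod 2 :=
  σ c + ∑ v' ∈ (univ.filter (fun v' => Adj v' c)).erase v, m v' c

/-- One Gallager-B iteration of the variable-to-check messages, under the convention that
variable nodes outside the trapping set `T` are correct and always send `0`; a node of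
`T` sends the majority of the extrinsic incoming check messages, ties broken to `0`. -/
def gbStep {V W : Type*} [Fintype V] [Fintype W] [DecidableEq V] [DecidableEq W]
    (Adj : V → W → Prop) [∀ v w, Decidable (Adj v w)]
    (T : Finset V) (σ : W → ZMod 2) (m : V → W → ZMod 2) : V → W → ZMod 2 :=
  fun v c =>
    if v ∈ T then
      (let ext := (univ.filter (fun c' => Adj v c')).erase c
       if 2 * (ext.filter (fun c' => ctov Adj σ m c' v = 1)).card > ext.card then 1 else 0)
    else 0

/-- Estimated syndrome at check node `c`: XOR of all incoming variable messages. -/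
def estSyn {V W : Type*} [Fintype V] [DecidableEq V]
    (Adj : V → W → Prop) [∀ v w, Decidable (Adj v w)]
    (m : V → W → ZMod 2) (c : W) : ZMod 2 :=
  ∑ v ∈ univ.filter (fun v => Adj v c), m v c

lemma gb_majority_zero {V W : Type*} [Fintype V] [Fintype W] [DecidableEq V] [DecidableEq W]
    (Adj : V → W → Prop) [∀ v w, Decidable (Adj v w)]
    (S : Finset V) (v : V) (c : W) (p : W → Prop) [DecidablePred p]
    (hmaj : (univ.filter (fun c : W => Adj v c ∧ Even (chkDeg Adj S c))).card >
            (univ.filter (fun c : W => Adj v c ∧ Odd (chkDeg Adj S c))).card)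
    (hsub : ∀ c', Adj v c' → p c' → Odd (chkDeg Adj S c')) :
    ¬ 2 * (((univ.filter (fun c' => Adj v c')).erase c).filter p).card >
        ((univ.filter (fun c' => Adj v c')).erase c).card := by
  intro hcon
  set N := univ.filter (fun c' => Adj v c') with hN
  have hsub2 : ((N.erase c).filter p) ⊆
      univ.filter (fun c' => Adj v c' ∧ Odd (chkDeg Adj S c')) := by
    intro x hx
    simp only [hN, Finset.mem_filter, Finset.mem_erase, Finset.mem_univ, true_and] at hx ⊢
    exact ⟨hx.1.2, hsub x hx.1.2 hx.2⟩
  have h1 := Finset.card_le_card hsub2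
  have e1 : univ.filter (fun c' : W => Adj v c' ∧ Even (chkDeg Adj S c')) =
      N.filter (fun c' => Even (chkDeg Adj S c')) := by
    simp [hN, Finset.filter_filter]
  have e2 : univ.filter (fun c' : W => Adj v c' ∧ Odd (chkDeg Adj S c')) =
      N.filter (fun c' => Odd (chkDeg Adj S c')) := by
    simp [hN, Finset.filter_filter]
  have hpart : (N.filter (fun c' => Even (chkDeg Adj S c'))).card +
      (N.filter (fun c' => Odd (chkDeg Adj S c'))).card = N.card := by
    have := Finset.card_filter_add_card_filter_not
      (s := N) (p := fun c' => Even (chkDeg Adj S c'))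
    simpa [Nat.not_even_iff_odd] using this
  have herase : N.card - 1 ≤ (N.erase c).card := Finset.pred_card_le_card_erase
  rw [e1, e2] at hmaj
  rw [e2] at h1
  omega

/-- If `A1`, `A2` are disjoint absorbing sets with `b1, b2 ≥ 1` odd-degree check nodes,
all graph neighbors of their even-degree check nodes lie inside the corresponding `A_i`,
and their odd-degree check sets intersect in a nonempty `D`, then with `A1` in error the
Gallager-B decoder keeps all variable messages from `A1 ∪ A2` equal to `0` in every
iteration; hence the estimated syndrome at each check node of `D` is `0` forever while
the input syndrome there is `1`. -/
theorem stmt_15 {V W : Type*} [Fintype V] [Fintype W] [DecidableEq V] [DecidableEq W]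
    (Adj : V → W → Prop) [∀ v w, Decidable (Adj v w)]
    (A1 A2 : Finset V) (a1 b1 a2 b2 : ℕ) (hb1 : 1 ≤ b1) (hb2 : 1 ≤ b2)
    (h1 : IsAbsorbing Adj A1 a1 b1) (h2 : IsAbsorbing Adj A2 a2 b2)
    (hdisj : A1 ∩ A2 = ∅)
    (hE1 : ∀ c ∈ evenChecks Adj A1, ∀ v : V, Adj v c → v ∈ A1)
    (hE2 : ∀ c ∈ evenChecks Adj A2, ∀ v : V, Adj v c → v ∈ A2)
    (D : Finset W) (hD : D = oddChecks Adj A1 ∩ oddChecks Adj A2) (hDne : D.Nonempty)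
    (σ : W → ZMod 2) (hσ : σ = fun c => if c ∈ oddChecks Adj A1 then 1 else 0) :
    (∀ ℓ : ℕ, (gbStep Adj (A1 ∪ A2) σ)^[ℓ] (fun _ _ => 0) = fun _ _ => 0) ∧
    (∀ c ∈ D, σ c = 1 ∧
      ∀ ℓ : ℕ, estSyn Adj ((gbStep Adj (A1 ∪ A2) σ)^[ℓ] (fun _ _ => 0)) c = 0) := by
  have hctov : ∀ c' v', ctov Adj σ (fun _ _ => (0 : ZMod 2)) c' v' = σ c' := by
    intro c' v'; simp [ctov]
  have hone : ∀ c', σ c' = 1 ↔ Odd (chkDeg Adj A1 c') := by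
    intro c'
    subst hσ
    simp only [oddChecks, Finset.mem_filter, Finset.mem_univ, true_and]
    split_ifs with h
    · simpa using h
    · simpa using h
  have hfix : gbStep Adj (A1 ∪ A2) σ (fun _ _ => 0) = fun _ _ => 0 := by
    funext v c
    by_cases hv : v ∈ A1 ∪ A2
    case neg => simp [gbStep, hv]
    have hnm : ¬ 2 * (((univ.filter (fun c' => Adj v c')).erase c).filter
          (fun c' => ctov Adj σ (fun _ _ => (0 : ZMod 2)) c' v = 1)).card >
        ((univ.filter (fun c' => Adj v c')).erase c).card := by
      simp only [Finset.mem_union] at hv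
      rcases hv with hv1 | hv2
      · exact gb_majority_zero Adj A1 v c _ (h1.2.2 v hv1)
          (fun c' _ hp => (hone c').1 (by simpa [hctov] using hp))
      · refine gb_majority_zero Adj A2 v c _ (h2.2.2 v hv2)
          (fun c' hadj hp => ?_)
        have hodd1 : Odd (chkDeg Adj A1 c') := (hone c').1 (by simpa [hctov] using hp)
        -- c' has a neighbor in A1
        have hne : ∃ u ∈ A1, Adj u c' := by
          by_contra hno
          push_neg at hno
          have : chkDeg Adj A1 c' = 0 := by
            simp only [chkDeg, Finset.card_eq_zero, Finset.filter_eq_empty_iff]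
            exact fun u hu => hno u hu
          simp [this] at hodd1
        obtain ⟨u, hu1, huadj⟩ := hne
        by_contra hnodd
        rw [Nat.not_odd_iff_even] at hnodd
        have hc'even : c' ∈ evenChecks Adj A2 := by
          simp only [evenChecks, Finset.mem_filter, Finset.mem_univ, true_and]
          exact ⟨⟨v, hv2, hadj⟩, hnodd⟩
        have : u ∈ A2 := hE2 c' hc'even u huadj
        have : u ∈ A1 ∩ A2 := Finset.mem_inter.2 ⟨hu1, this⟩
        simp [hdisj] at this
    simp only [gbStep, if_pos hv]
    simp [hnm]
  have hiter : ∀ ℓ : ℕ, (gbStep Adj (A1 ∪ A2) σ)^[ℓ] (fun _ _ => 0) = fun _ _ => 0 :=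
    fun ℓ => Function.iterate_fixed hfix ℓ
  refine ⟨hiter, fun c hc => ?_⟩
  have hcodd : c ∈ oddChecks Adj A1 := by
    rw [hD] at hc; exact (Finset.mem_inter.1 hc).1
  constructor
  · rw [hσ]; simp [hcodd]
  · intro ℓ
    rw [hiter ℓ]
    simp [estSyn]
end

section
/- Let A be an (a, 0)-absorbing set that is partitioned into two disjoint absorbing sets A1, A2, where every check node adjacent to A has all its neighbors in A. Then A1 and A2 have the same nonempty set of odd-degree check nodes, and the invariant 'all variable messages are zero' is preserved by the Gallager-B update when A1 is in error, so the estimated syndrome at the shared odd-degree check nodes is always 0 ≠ 1 (the input syndrome), and A1 is failure inducing. -/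
open Finset

/-- Let `A = A1 ∪ A2` be an `(a,0)`-absorbing set partitioned into two disjoint
absorbing sets `A1`, `A2` (each with `b ≥ 1` odd-degree check nodes), such that every
check node adjacent to `A` has all its neighbors in `A`.  Then `A1` and `A2` have the
same nonempty set of odd-degree check nodes; with `A1` in error, the all-zero message
state is preserved by the Gallager-B update, the estimated syndrome at the shared
odd-degree check nodes is always `0` while the input syndrome there is `1`, and the
estimated syndrome never equals the input syndrome: `A1` is failure inducing. -/
theorem stmt_16 {V W : Type*} [Fintype V] [Fintype W] [DecidableEq V] [DecidableEq W]
    (Adj : V → W → Prop) [∀ v w, Decidable (Adj v w)]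
    (A A1 A2 : Finset V) (a a1 a2 b : ℕ) (hb : 1 ≤ b)
    (hunion : A = A1 ∪ A2) (hdisj : A1 ∩ A2 = ∅)
    (hA : IsAbsorbing Adj A a 0)
    (h1 : IsAbsorbing Adj A1 a1 b) (h2 : IsAbsorbing Adj A2 a2 b)
    (hclosed : ∀ c : W, (∃ v ∈ A, Adj v c) → ∀ v : V, Adj v c → v ∈ A)
    (σ : W → ZMod 2) (hσ : σ = fun c => if c ∈ oddChecks Adj A1 then 1 else 0) :
    (oddChecks Adj A1 = oddChecks Adj A2 ∧ (oddChecks Adj A1).Nonempty) ∧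
    (∀ ℓ : ℕ, (gbStep Adj A σ)^[ℓ] (fun _ _ => 0) = fun _ _ => 0) ∧
    (∀ c ∈ oddChecks Adj A1, σ c = 1 ∧
      ∀ ℓ : ℕ, estSyn Adj ((gbStep Adj A σ)^[ℓ] (fun _ _ => 0)) c = 0) ∧
    (∀ ℓ : ℕ, estSyn Adj ((gbStep Adj A σ)^[ℓ] (fun _ _ => 0)) ≠ σ) := by
  -- degrees add
  have hdeg : ∀ c : W, chkDeg Adj A c = chkDeg Adj A1 c + chkDeg Adj A2 c := by
    intro c
    have hd : Disjoint A1 A2 := Finset.disjoint_iff_inter_eq_empty.mpr hdisj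
    simp only [chkDeg, hunion, Finset.filter_union]
    exact Finset.card_union_of_disjoint (Finset.disjoint_filter_filter hd)
  -- all checks have even degree wrt A
  have hevenA : ∀ c : W, Even (chkDeg Adj A c) := by
    intro c
    have h0 : oddChecks Adj A = ∅ := Finset.card_eq_zero.mp hA.2.1
    by_contra hodd
    have : c ∈ oddChecks Adj A := by
      simp only [oddChecks, Finset.mem_filter, Finset.mem_univ, true_and]
      exact Nat.not_even_iff_odd.mp hodd
    simp [h0] at this
  -- equal odd check sets
  have hodd12 : oddChecks Adj A1 = oddChecks Adj A2 := by
    ext c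
    have h := hevenA c
    rw [hdeg c, Nat.even_add, Nat.even_iff, Nat.even_iff] at h
    simp only [oddChecks, Finset.mem_filter, Finset.mem_univ, true_and,
      Nat.odd_iff]
    omega
  have hne : (oddChecks Adj A1).Nonempty := by
    have : (oddChecks Adj A1).card = b := h1.2.1
    exact Finset.card_pos.mp (by omega)
  -- fixed point lemma
  have hstep : gbStep Adj A σ (fun _ _ => 0) = fun _ _ => 0 := by
    funext v c
    simp only [gbStep]
    split_ifs with hvA hmaj
    · exfalso
      set ext := (univ.filter (fun c' => Adj v c')).erase c with hext
      -- ctov with zero messages is σ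
      have hct : ∀ c' : W, ctov Adj σ (fun _ _ => 0) c' v = σ c' := by
        intro c'
        simp [ctov]
      -- v is in A1 or A2; pick S accordingly
      have hvS : ∃ S : Finset V, v ∈ S ∧ oddChecks Adj A1 = oddChecks Adj S ∧
          (univ.filter (fun c : W => Adj v c ∧ Even (chkDeg Adj S c))).card >
          (univ.filter (fun c : W => Adj v c ∧ Odd (chkDeg Adj S c))).card := by
        rw [hunion, Finset.mem_union] at hvA
        rcases hvA with hv | hv
        · exact ⟨A1, hv, rfl, h1.2.2 v hv⟩
        · exact ⟨A2, hv, hodd12, h2.2.2 v hv⟩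
      obtain ⟨S, hvS, hoddS, habs⟩ := hvS
      set O := (univ.filter (fun c : W => Adj v c ∧ Odd (chkDeg Adj S c))) with hO
      set E := (univ.filter (fun c : W => Adj v c ∧ Even (chkDeg Adj S c))) with hE
      -- partition of neighbors
      have hpart : E.card + O.card = (univ.filter (fun c' : W => Adj v c')).card := by
        rw [hE, hO]
        simp only [← Nat.not_even_iff_odd]
        rw [← Finset.filter_filter, ← Finset.filter_filter]
        exact Finset.card_filter_add_card_filter_not
          (fun c' => Even (chkDeg Adj S c'))
      -- the filtered set is a subset of O
      have hsub : ext.filter (fun c' => ctov Adj σ (fun _ _ => 0) c' v = 1) ⊆ O := by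
        intro c' hc'
        rw [Finset.mem_filter] at hc'
        have hadj : Adj v c' := by
          have := Finset.mem_of_mem_erase hc'.1
          simpa using this
        have hσ1 : σ c' = 1 := by rw [← hct c']; exact hc'.2
        have hmem : c' ∈ oddChecks Adj A1 := by
          by_contra hno
          rw [hσ] at hσ1
          simp only [hno, if_false] at hσ1
          exact absurd hσ1 (by decide)
        rw [hoddS] at hmem
        have hoddmem : Odd (chkDeg Adj S c') := by
          simpa [oddChecks] using hmem
        simp only [hO, Finset.mem_filter, Finset.mem_univ, true_and]
        exact ⟨hadj, hoddmem⟩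
      have hcnt : (ext.filter (fun c' => ctov Adj σ (fun _ _ => 0) c' v = 1)).card ≤ O.card :=
        Finset.card_le_card hsub
      have hextcard : (univ.filter (fun c' : W => Adj v c')).card - 1 ≤ ext.card :=
        Finset.pred_card_le_card_erase
      omega
    · rfl
    · rfl
  have hiter : ∀ ℓ : ℕ, (gbStep Adj A σ)^[ℓ] (fun _ _ => 0) = fun _ _ => 0 := by
    intro ℓ
    induction ℓ with
    | zero => rfl
    | succ n ih => rw [Function.iterate_succ_apply', ih, hstep]
  have hest : ∀ ℓ : ℕ, ∀ c : W,
      estSyn Adj ((gbStep Adj A σ)^[ℓ] (fun _ _ => 0)) c = 0 := by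
    intro ℓ c
    rw [hiter ℓ]
    simp [estSyn]
  refine ⟨⟨hodd12, hne⟩, hiter, ?_, ?_⟩
  · intro c hc
    exact ⟨by simp [hσ, hc], fun ℓ => hest ℓ c⟩
  · intro ℓ hcontra
    obtain ⟨c, hc⟩ := hne
    have h0 : estSyn Adj ((gbStep Adj A σ)^[ℓ] (fun _ _ => 0)) c = 0 := hest ℓ c
    rw [hcontra] at h0
    simp [hσ, hc] at h0
end

section
/- In the hypergraph product construction, the X and Z block check matrices are orthogonal: H_X · H_Z^T = 0 over F_2, where H_X = (H_1 ⊗ I_{n_2} | I_{r_1} ⊗ H_2^T) and H_Z = (I_{n_1} ⊗ H_2 | H_1^T ⊗ I_{r_2}). -/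
open Matrix Kronecker

section HypergraphProduct

variable {R ι₁ κ₁ ι₂ κ₂ : Type*} [Fintype ι₁] [Fintype κ₁] [Fintype ι₂] [Fintype κ₂]
  [DecidableEq ι₁] [DecidableEq κ₁] [DecidableEq ι₂] [DecidableEq κ₂]

def hypergraphProductX [Zero R] [One R] [Mul R]
    (H₁ : Matrix κ₁ ι₁ R) (H₂ : Matrix κ₂ ι₂ R) :
    Matrix (κ₁ × ι₂) ((ι₁ × ι₂) ⊕ (κ₁ × κ₂)) R :=
  fromCols (H₁ ⊗ₖ (1 : Matrix ι₂ ι₂ R)) ((1 : Matrix κ₁ κ₁ R) ⊗ₖ H₂ᵀ)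

def hypergraphProductZ [Zero R] [One R] [Mul R]
    (H₁ : Matrix κ₁ ι₁ R) (H₂ : Matrix κ₂ ι₂ R) :
    Matrix (ι₁ × κ₂) ((ι₁ × ι₂) ⊕ (κ₁ × κ₂)) R :=
  fromCols ((1 : Matrix ι₁ ι₁ R) ⊗ₖ H₂) (H₁ᵀ ⊗ₖ (1 : Matrix κ₂ κ₂ R))

theorem hypergraphProductX_mul_transpose_hypergraphProductZ [CommSemiring R]
    (H₁ : Matrix κ₁ ι₁ R) (H₂ : Matrix κ₂ ι₂ R) :
    hypergraphProductX H₁ H₂ * (hypergraphProductZ H₁ H₂)ᵀ = H₁ ⊗ₖ H₂ᵀ + H₁ ⊗ₖ H₂ᵀ := by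
  rw [hypergraphProductX, hypergraphProductZ, transpose_fromCols, fromCols_mul_fromRows,
    ← kroneckerMap_transpose, ← kroneckerMap_transpose, transpose_one, transpose_one,
    transpose_transpose, ← mul_kronecker_mul, ← mul_kronecker_mul]
  simp only [Matrix.mul_one, Matrix.one_mul]

theorem hypergraphProductX_mul_transpose_hypergraphProductZ_eq_zero [CommSemiring R]
    [CharP R 2] (H₁ : Matrix κ₁ ι₁ R) (H₂ : Matrix κ₂ ι₂ R) :
    hypergraphProductX H₁ H₂ * (hypergraphProductZ H₁ H₂)ᵀ = 0 := by
  have H₁_add_self : H₁ + H₁ = 0 := by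
    ext
    exact CharTwo.add_self_eq_zero _
  rw [hypergraphProductX_mul_transpose_hypergraphProductZ, ← add_kronecker, H₁_add_self,
    zero_kronecker]

end HypergraphProduct

/-- Hypergraph product: the X and Z block check matrices
`H_X = (H₁ ⊗ I_{n₂} | I_{r₁} ⊗ H₂ᵀ)` and `H_Z = (I_{n₁} ⊗ H₂ | H₁ᵀ ⊗ I_{r₂})` are
orthogonal over `F₂`: `H_X · H_Zᵀ = 0`. -/
theorem stmt_17 (r1 n1 r2 n2 : ℕ)
    (H1 : Matrix (Fin r1) (Fin n1) (ZMod 2)) (H2 : Matrix (Fin r2) (Fin n2) (ZMod 2)) :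
    (Matrix.fromCols (H1 ⊗ₖ (1 : Matrix (Fin n2) (Fin n2) (ZMod 2)))
        ((1 : Matrix (Fin r1) (Fin r1) (ZMod 2)) ⊗ₖ H2ᵀ)) *
      (Matrix.fromCols ((1 : Matrix (Fin n1) (Fin n1) (ZMod 2)) ⊗ₖ H2)
        (H1ᵀ ⊗ₖ (1 : Matrix (Fin r2) (Fin r2) (ZMod 2))))ᵀ = 0 :=
  hypergraphProductX_mul_transpose_hypergraphProductZ_eq_zero H1 H2
end
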